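/- arXiv:2504.10761 — 8 statements merged into one kernel-verified Lean document; each statement's English description precedes it below -/
import Mathlib

section
/- Let p be a prime number and let H be a closed subgroup of the additive topological group ℤ_p × ℤ_p (with the product topology) such that the quotient topological group (ℤ_p × ℤ_p)/H is isomorphic, as a topological additive group, to ℤ_p. Then there exist a, b ∈ ℤ_p with (p ∤ a or p ∤ b) such that H is equal to the ℤ_p-submodule of ℤ_p × ℤ_p generated by the single element (a, b). -/
/-!
Continuity of `e` and density of `ℤ` in `ℤ_[p]` make the additive surjection
`ℤ_[p] × ℤ_[p] → ℤ_[p]` with kernel `H` into a `ℤ_[p]`-linear map `φ`. Writing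
`c = φ (1, 0)`, `d = φ (0, 1)`, surjectivity gives `u c + v d = 1`, and then the kernel of
`(x, y) ↦ x c + y d` is spanned by `(-d, c)`; this vector is primitive because `p` is not a unit.
-/

section PadicIntLinear

variable {p : ℕ} [Fact p.Prime]
  {M : Type*} [AddCommGroup M] [Module ℤ_[p] M] [TopologicalSpace M] [ContinuousSMul ℤ_[p] M]
  {N : Type*} [AddCommGroup N] [Module ℤ_[p] N] [TopologicalSpace N] [ContinuousSMul ℤ_[p] N]
  [T2Space N]

theorem map_padicInt_smul (f : M →+ N) (hf : Continuous f) (r : ℤ_[p]) (x : M) :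
    f (r • x) = r • f x :=
  suffices (fun r : ℤ_[p] => f (r • x)) = fun r => r • f x from congr_fun this r
  PadicInt.denseRange_intCast.equalizer (by fun_prop) (continuous_id.smul continuous_const)
    (funext fun n => by simp only [Function.comp_apply, Int.cast_smul_eq_zsmul, map_zsmul])

def AddMonoidHom.toPadicIntLinearMap (f : M →+ N) (hf : Continuous f) : M →ₗ[ℤ_[p]] N where
  toFun := f
  map_add' := f.map_add
  map_smul' := map_padicInt_smul f hf

end PadicIntLinear

section CommRing

variable {R : Type*} [CommRing R]

theorem LinearMap.apply_eq_fst_mul_add_snd_mul (f : R × R →ₗ[R] R) (x : R × R) :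
    f x = x.1 * f (1, 0) + x.2 * f (0, 1) := by
  have hx : x = x.1 • ((1, 0) : R × R) + x.2 • ((0, 1) : R × R) := by ext <;> simp
  conv_lhs => rw [hx, map_add, map_smul, map_smul, smul_eq_mul, smul_eq_mul]

theorem LinearMap.isCoprime_of_surjective (f : R × R →ₗ[R] R) (hf : Function.Surjective f) :
    IsCoprime (f (1, 0)) (f (0, 1)) := by
  obtain ⟨w, hw⟩ := hf 1
  exact ⟨w.1, w.2, by rw [← f.apply_eq_fst_mul_add_snd_mul, hw]⟩

theorem LinearMap.ker_eq_span_of_isCoprime (f : R × R →ₗ[R] R)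
    (h : IsCoprime (f (1, 0)) (f (0, 1))) :
    LinearMap.ker f = R ∙ (-f (0, 1), f (1, 0)) := by
  obtain ⟨u, v, huv⟩ := h
  ext ⟨x, y⟩
  rw [LinearMap.mem_ker, Submodule.mem_span_singleton, f.apply_eq_fst_mul_add_snd_mul (x, y)]
  constructor
  · intro hxy
    refine ⟨y * u - x * v, ?_⟩
    simp only [Prod.smul_mk, smul_eq_mul, Prod.mk.injEq]
    constructor
    · linear_combination x * huv - u * hxy
    · linear_combination y * huv - v * hxy
  · rintro ⟨r, hr⟩
    simp only [Prod.smul_mk, smul_eq_mul, Prod.mk.injEq] at hr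
    linear_combination -f (1, 0) * hr.1 - f (0, 1) * hr.2

end CommRing

theorem stmt0_general (p : ℕ) [Fact p.Prime]
    (H : AddSubgroup (ℤ_[p] × ℤ_[p]))
    (e : ((ℤ_[p] × ℤ_[p]) ⧸ H) ≃+ ℤ_[p])
    (he : Continuous e) :
    ∃ a b : ℤ_[p], (¬ (p : ℤ_[p]) ∣ a ∨ ¬ (p : ℤ_[p]) ∣ b) ∧
      H = (Submodule.span ℤ_[p] {((a, b) : ℤ_[p] × ℤ_[p])}).toAddSubgroup := by
  let φ := ((e : _ →+ ℤ_[p]).comp (QuotientAddGroup.mk' H)).toPadicIntLinearMap (p := p)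
    (he.comp continuous_quot_mk)
  have hker : (LinearMap.ker φ).toAddSubgroup = H :=
    (AddMonoidHom.ker_addEquiv_comp (QuotientAddGroup.mk' H) e).trans (QuotientAddGroup.ker_mk' H)
  have hφ : IsCoprime (φ (1, 0)) (φ (0, 1)) :=
    φ.isCoprime_of_surjective (e.surjective.comp (QuotientAddGroup.mk'_surjective H))
  refine ⟨-φ (0, 1), φ (1, 0), ?_, by rw [← hker, φ.ker_eq_span_of_isCoprime hφ]⟩
  by_contra! hdvd
  exact PadicInt.p_nonunit (hφ.symm.neg_left.isUnit_of_dvd' hdvd.1 hdvd.2)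

/-- Let `p` be a prime and `H` a closed subgroup of the additive
topological group `ℤ_p × ℤ_p` such that the quotient topological group is isomorphic,
as a topological additive group, to `ℤ_p`.  Then there are `a, b ∈ ℤ_p` with
`p ∤ a` or `p ∤ b` such that `H = ℤ_p·(a, b)`. -/
theorem stmt0 (p : ℕ) [Fact p.Prime]
    (H : AddSubgroup (ℤ_[p] × ℤ_[p])) (hH : IsClosed (H : Set (ℤ_[p] × ℤ_[p])))
    (e : ((ℤ_[p] × ℤ_[p]) ⧸ H) ≃+ ℤ_[p])
    (he : Continuous e) (he' : Continuous e.symm) :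
    ∃ a b : ℤ_[p], (¬ (p : ℤ_[p]) ∣ a ∨ ¬ (p : ℤ_[p]) ∣ b) ∧
      H = (Submodule.span ℤ_[p] {((a, b) : ℤ_[p] × ℤ_[p])}).toAddSubgroup :=
  stmt0_general p H e he
end

section
/- Let p be a prime number, let R = ℤ_p[[X,Y]] be the ring of formal power series in two variables over ℤ_p, and let M be a finitely generated pseudo-null R-module. Let f ∈ R be a prime element. Then the quotient module M/fM is a torsion module over the integral domain R/(f); that is, every element of M/fM is annihilated by some nonzero element of R/(f). -/
/-!
Since `ℤ_p[[X,Y]]` is Noetherian, Krull's principal ideal theorem gives the prime `(f)` height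
at most one, so a pseudo-null module vanishes after localizing at `(f)`: every element of `M`
is killed by some `r ∉ (f)`, and then so is its image in `M/fM`.
-/

/-- A finitely generated module `M` over a commutative ring `R` is *pseudo-null*
if its localization at every prime ideal of height at most `1` vanishes. -/
def IsPseudoNull (R : Type*) [CommRing R] (M : Type*) [AddCommGroup M] [Module R M] : Prop :=
  ∀ (P : Ideal R) (hP : P.IsPrime),
    Order.height (⟨P, hP⟩ : PrimeSpectrum R) ≤ 1 →
      Subsingleton (LocalizedModule P.primeCompl M)

open Ideal

theorem Ideal.height_span_singleton_le_one_of_prime {R : Type*} [CommRing R] [IsNoetherianRing R]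
    {f : R} (hf : Prime f) : (span {f}).height ≤ 1 :=
  have : (span {f}).IsPrime := (span_singleton_prime hf.ne_zero).mpr hf
  height_le_one_of_isPrincipal_of_mem_minimalPrimes (span {f}) _
    (by rw [minimalPrimes_eq_subsingleton_self]; rfl)

theorem IsPseudoNull.exists_smul_eq_zero_of_prime {R : Type*} [CommRing R] [IsNoetherianRing R]
    {M : Type*} [AddCommGroup M] [Module R M] (hM : IsPseudoNull R M) {f : R} (hf : Prime f)
    (m : M) : ∃ r ∉ span {f}, r • m = 0 := by
  have hP : (span {f}).IsPrime := (span_singleton_prime hf.ne_zero).mpr hf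
  have hheight : Order.height (⟨span {f}, hP⟩ : PrimeSpectrum R) ≤ 1 := by
    rw [← PrimeSpectrum.height_eq_orderHeight]
    exact height_span_singleton_le_one_of_prime hf
  exact LocalizedModule.subsingleton_iff.mp (hM _ hP hheight) m

theorem stmt3_general (p : ℕ) [Fact p.Prime]
    (M : Type) [AddCommGroup M] [Module (MvPowerSeries (Fin 2) ℤ_[p]) M]
    (hM : IsPseudoNull (MvPowerSeries (Fin 2) ℤ_[p]) M)
    (f : MvPowerSeries (Fin 2) ℤ_[p]) (hf : Prime f) :
    ∀ x : M ⧸ (Ideal.span {f} • ⊤ : Submodule (MvPowerSeries (Fin 2) ℤ_[p]) M),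
      ∃ r : MvPowerSeries (Fin 2) ℤ_[p], r ∉ Ideal.span {f} ∧ r • x = 0 := by
  intro x
  obtain ⟨m, rfl⟩ := Submodule.Quotient.mk_surjective _ x
  obtain ⟨r, hr, hrm⟩ := hM.exists_smul_eq_zero_of_prime hf m
  exact ⟨r, hr, by rw [← Submodule.Quotient.mk_smul, hrm, Submodule.Quotient.mk_zero]⟩

/-- Let `R = ℤ_p[[X, Y]]`, let `M` be a finitely generated
pseudo-null `R`-module and let `f ∈ R` be a prime element.  Then `M/fM` is a
torsion module over the integral domain `R/(f)`: every element of `M/fM` is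
annihilated by some element of `R` that is nonzero modulo `(f)`. -/
theorem stmt3 (p : ℕ) [Fact p.Prime]
    (M : Type) [AddCommGroup M] [Module (MvPowerSeries (Fin 2) ℤ_[p]) M]
    [Module.Finite (MvPowerSeries (Fin 2) ℤ_[p]) M]
    (hM : IsPseudoNull (MvPowerSeries (Fin 2) ℤ_[p]) M)
    (f : MvPowerSeries (Fin 2) ℤ_[p]) (hf : Prime f) :
    ∀ x : M ⧸ (Ideal.span {f} • ⊤ : Submodule (MvPowerSeries (Fin 2) ℤ_[p]) M),
      ∃ r : MvPowerSeries (Fin 2) ℤ_[p], r ∉ Ideal.span {f} ∧ r • x = 0 :=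
  stmt3_general p M hM f hf
end

section
/- Let p be a prime number, let R = ℤ_p[[X,Y]] be the ring of formal power series in two variables over ℤ_p, and let M be a finitely generated pseudo-null R-module. Let f ∈ R be a prime element. Then the submodule M[f] = {m ∈ M : f·m = 0} (the kernel of multiplication by f on M) is a torsion module over the integral domain R/(f); that is, every element of M[f] is annihilated by some nonzero element of R/(f). -/
/-! The ideal `(f)` is a prime of height at most one by Krull's principal ideal theorem
(`ℤ_p⟦X, Y⟧` is Noetherian), so pseudo-nullity kills `M` at `(f)`: every `x ∈ M` is
annihilated by some `r ∉ (f)`. -/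

theorem PrimeSpectrum.height_span_singleton_le_one {R : Type*} [CommRing R]
    [IsNoetherianRing R] {f : R} (hf : (Ideal.span {f}).IsPrime) :
    Order.height (⟨Ideal.span {f}, hf⟩ : PrimeSpectrum R) ≤ 1 := by
  rw [← PrimeSpectrum.height_eq_orderHeight]
  exact Ideal.height_le_one_of_isPrincipal_of_mem_minimalPrimes (Ideal.span {f}) _
    (by rw [Ideal.minimalPrimes_eq_subsingleton_self]; rfl)

theorem IsPseudoNull.exists_notMem_smul_eq_zero {R M : Type*} [CommRing R] [AddCommGroup M]
    [Module R M] (hM : IsPseudoNull R M) {P : Ideal R} (hP : P.IsPrime)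
    (hP₁ : Order.height (⟨P, hP⟩ : PrimeSpectrum R) ≤ 1) (x : M) :
    ∃ r ∉ P, r • x = 0 :=
  LocalizedModule.subsingleton_iff.mp (hM P hP hP₁) x

theorem stmt4_general (p : ℕ) [Fact p.Prime]
    (M : Type) [AddCommGroup M] [Module (MvPowerSeries (Fin 2) ℤ_[p]) M]
    (hM : IsPseudoNull (MvPowerSeries (Fin 2) ℤ_[p]) M)
    (f : MvPowerSeries (Fin 2) ℤ_[p]) (hf : Prime f) :
    ∀ x : M, f • x = 0 →
      ∃ r : MvPowerSeries (Fin 2) ℤ_[p], r ∉ Ideal.span {f} ∧ r • x = 0 := by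
  intro x _
  have hfP : (Ideal.span {f}).IsPrime := (Ideal.span_singleton_prime hf.ne_zero).mpr hf
  exact hM.exists_notMem_smul_eq_zero hfP (PrimeSpectrum.height_span_singleton_le_one hfP) x

/-- Let `R = ℤ_p[[X, Y]]`, let `M` be a finitely generated
pseudo-null `R`-module and let `f ∈ R` be a prime element.  Then the kernel
`M[f]` of multiplication by `f` on `M` is a torsion module over `R/(f)`:
every `x ∈ M` with `f • x = 0` is annihilated by some element of `R` that is
nonzero modulo `(f)`. -/
theorem stmt4 (p : ℕ) [Fact p.Prime]
    (M : Type) [AddCommGroup M] [Module (MvPowerSeries (Fin 2) ℤ_[p]) M]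
    [Module.Finite (MvPowerSeries (Fin 2) ℤ_[p]) M]
    (hM : IsPseudoNull (MvPowerSeries (Fin 2) ℤ_[p]) M)
    (f : MvPowerSeries (Fin 2) ℤ_[p]) (hf : Prime f) :
    ∀ x : M, f • x = 0 →
      ∃ r : MvPowerSeries (Fin 2) ℤ_[p], r ∉ Ideal.span {f} ∧ r • x = 0 :=
  stmt4_general p M hM f hf
end

section
/- Let p be a prime number and let R = ℤ_p[[X,Y]] be the ring of formal power series in two variables over ℤ_p. Let f ∈ R be a prime element, let g_1, …, g_m ∈ R be elements with f ∤ g_i for all i, and suppose there is an exact sequence of R-modules 0 → S → ⊕_{i=1}^m R/(g_i) → N → 0 in which N is a finitely generated pseudo-null R-module. Then the quotient S/fS is a torsion module over the integral domain R/(f); that is, every element of S/fS is annihilated by some nonzero element of R/(f). -/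
/-! `S` embeds into `⊕ᵢ R/(gᵢ)`, which is killed by `∏ᵢ gᵢ`; hence so are `S` and `S/fS`.
Since `f` is prime and divides no `gᵢ`, it does not divide the product. -/

theorem prod_mem_annihilator_pi_quotient_span_singleton {R ι : Type*} [CommRing R] [Fintype ι]
    (g : ι → R) : ∏ i, g i ∈ Module.annihilator R (Π i, R ⧸ Ideal.span {g i}) := by
  rw [Module.annihilator_pi, Ideal.mem_iInf]
  intro i
  rw [Ideal.annihilator_quotient, Ideal.mem_span_singleton]
  exact Finset.dvd_prod_of_mem g (Finset.mem_univ i)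

theorem stmt7_general (p : ℕ) [Fact p.Prime] (m : ℕ)
    (f : MvPowerSeries (Fin 2) ℤ_[p]) (hf : Prime f)
    (g : Fin m → MvPowerSeries (Fin 2) ℤ_[p]) (hg : ∀ i, ¬ f ∣ g i)
    (S : Type) [AddCommGroup S] [Module (MvPowerSeries (Fin 2) ℤ_[p]) S]
    (ι : S →ₗ[MvPowerSeries (Fin 2) ℤ_[p]]
      ((i : Fin m) → MvPowerSeries (Fin 2) ℤ_[p] ⧸ Ideal.span {g i}))
    (hι : Function.Injective ι) :
    ∀ x : S ⧸ (Ideal.span {f} • ⊤ : Submodule (MvPowerSeries (Fin 2) ℤ_[p]) S),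
      ∃ r : MvPowerSeries (Fin 2) ℤ_[p], r ∉ Ideal.span {f} ∧ r • x = 0 := by
  intro x
  have hann : ∏ i, g i ∈ Module.annihilator _ (S ⧸ (Ideal.span {f} • ⊤ : Submodule _ S)) :=
    (Submodule.mkQ _).annihilator_le_of_surjective (Submodule.mkQ_surjective _)
      (ι.annihilator_le_of_injective hι (prod_mem_annihilator_pi_quotient_span_singleton g))
  refine ⟨∏ i, g i, fun hmem ↦ ?_, Module.mem_annihilator.mp hann x⟩
  obtain ⟨i, -, hi⟩ := hf.exists_mem_finset_dvd (Ideal.mem_span_singleton.mp hmem)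
  exact hg i hi

/-- Let `R = ℤ_p[[X, Y]]`, let `f ∈ R` be a prime element, let
`g₁, …, g_m ∈ R` satisfy `f ∤ gᵢ`, and suppose that there is an exact sequence of
`R`-modules `0 → S → ⊕ᵢ R/(gᵢ) → N → 0` with `N` finitely generated pseudo-null.
Then `S/fS` is a torsion module over the integral domain `R/(f)`. -/
theorem stmt7 (p : ℕ) [Fact p.Prime] (m : ℕ)
    (f : MvPowerSeries (Fin 2) ℤ_[p]) (hf : Prime f)
    (g : Fin m → MvPowerSeries (Fin 2) ℤ_[p]) (hg : ∀ i, ¬ f ∣ g i)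
    (S N : Type) [AddCommGroup S] [Module (MvPowerSeries (Fin 2) ℤ_[p]) S]
    [AddCommGroup N] [Module (MvPowerSeries (Fin 2) ℤ_[p]) N]
    [Module.Finite (MvPowerSeries (Fin 2) ℤ_[p]) N]
    (hN : IsPseudoNull (MvPowerSeries (Fin 2) ℤ_[p]) N)
    (ι : S →ₗ[MvPowerSeries (Fin 2) ℤ_[p]]
      ((i : Fin m) → MvPowerSeries (Fin 2) ℤ_[p] ⧸ Ideal.span {g i}))
    (π : ((i : Fin m) → MvPowerSeries (Fin 2) ℤ_[p] ⧸ Ideal.span {g i})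
      →ₗ[MvPowerSeries (Fin 2) ℤ_[p]] N)
    (hι : Function.Injective ι) (hπ : Function.Surjective π)
    (hexact : LinearMap.range ι = LinearMap.ker π) :
    ∀ x : S ⧸ (Ideal.span {f} • ⊤ : Submodule (MvPowerSeries (Fin 2) ℤ_[p]) S),
      ∃ r : MvPowerSeries (Fin 2) ℤ_[p], r ∉ Ideal.span {f} ∧ r • x = 0 :=
  stmt7_general p m f hf g hg S ι hι
end

section
/- Let p be a prime number and let R = ℤ_p[[X,Y]] be the ring of formal power series in two variables over ℤ_p. Let f ∈ R be a prime element and let M be a finitely generated R-module. If M/fM is a torsion module over R/(f) (every element of M/fM is annihilated by some nonzero element of R/(f)), then M is a torsion R-module (every element of M is annihilated by some nonzero element of R). -/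
open Module PrimeSpectrum in
/-- By Nakayama, `Supp(M ⧸ 𝔭M) = Supp M ∩ V(𝔭)` for finite `M`; as `𝔭 ∈ V(𝔭)`, the hypothesis
`(M ⧸ 𝔭M)_𝔭 = 0` forces `M_𝔭 = 0`. -/
theorem Module.exists_notMem_smul_eq_zero_of_quotient {R M : Type*} [CommRing R]
    [AddCommGroup M] [Module R M] [Module.Finite R M] (P : Ideal R) [P.IsPrime]
    (h : ∀ x : M ⧸ (P • ⊤ : Submodule R M), ∃ r ∉ P, r • x = 0) (x : M) :
    ∃ s ∉ P, s • x = 0 := by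
  let 𝔭 : PrimeSpectrum R := ⟨P, inferInstance⟩
  have hquot : 𝔭 ∉ support R (M ⧸ (P • ⊤ : Submodule R M)) := notMem_support_iff'.mpr h
  have hM : 𝔭 ∉ support R M := fun hM ↦
    hquot ((support_quotient (M := M) P).symm ▸ ⟨hM, (mem_zeroLocus 𝔭 P).mpr le_rfl⟩)
  exact notMem_support_iff'.mp hM x

/-- Let `R = ℤ_p[[X, Y]]`, let `f ∈ R` be a prime element and let
`M` be a finitely generated `R`-module.  If `M/fM` is torsion over `R/(f)` (every
element is annihilated by some element of `R` that is nonzero modulo `(f)`), then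
`M` is a torsion `R`-module. -/
theorem stmt8 (p : ℕ) [Fact p.Prime]
    (f : MvPowerSeries (Fin 2) ℤ_[p]) (hf : Prime f)
    (M : Type) [AddCommGroup M] [Module (MvPowerSeries (Fin 2) ℤ_[p]) M]
    [Module.Finite (MvPowerSeries (Fin 2) ℤ_[p]) M]
    (htors : ∀ x : M ⧸ (Ideal.span {f} • ⊤ : Submodule (MvPowerSeries (Fin 2) ℤ_[p]) M),
      ∃ r : MvPowerSeries (Fin 2) ℤ_[p], r ∉ Ideal.span {f} ∧ r • x = 0) :
    ∀ x : M, ∃ r : MvPowerSeries (Fin 2) ℤ_[p], r ≠ 0 ∧ r • x = 0 := by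
  have : (Ideal.span {f}).IsPrime := (Ideal.span_singleton_prime hf.ne_zero).mpr hf
  intro x
  obtain ⟨s, hs, hsx⟩ := Module.exists_notMem_smul_eq_zero_of_quotient _ htors x
  exact ⟨s, fun h ↦ hs (h ▸ zero_mem _), hsx⟩
end

section
/- Let p be a prime number and let a, b be natural numbers, not both zero, such that p ∤ a or p ∤ b. Then the element f_{a,b} = (1+X)^a·(1+Y)^b − 1 is a prime element of the ring ℤ_p[[X,Y]] of formal power series in two variables over ℤ_p. -/
/-!
Write `uᵢ = 1 + Xᵢ`. For an invertible integer matrix `M`, the substitution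
`uᵢ ↦ ∏ⱼ uⱼ ^ Mᵢⱼ` is an automorphism of `R⟦X₀, X₁⟧`: these substitutions compose according
to matrix multiplication. Put `g = gcd(a, b)` and `(a, b) = g (A, B)`; completing the primitive row `(A, B)`
to a matrix of determinant one gives an automorphism sending `u₀ ^ g - 1` to `u₀ ^ a u₁ ^ b - 1`.
Finally `u₀ ^ g - 1 = X₀ (1 + u₀ + ⋯ + u₀ ^ (g - 1))`, whose second factor has constant
coefficient `g`, a unit of `ℤ_p` when `p ∤ g`, so `u₀ ^ g - 1` is associated to the prime `X₀`.
-/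

open scoped Matrix

theorem Finset.prod_zpow_eq_zpow_sum {G ι : Type*} [CommGroup G] (s : Finset ι) (f : ι → ℤ)
    (u : G) : ∏ i ∈ s, u ^ f i = u ^ ∑ i ∈ s, f i := by
  classical
  induction s using Finset.induction_on with
  | empty => simp
  | insert a s ha ih => rw [Finset.prod_insert ha, Finset.sum_insert ha, ih, zpow_add]

namespace MvPowerSeries

variable {R : Type*} [CommRing R]

theorem prime_X_zero [IsDomain R] (n : ℕ) : Prime (X 0 : MvPowerSeries (Fin (n + 1)) R) := by
  have : IsDomain (MvPowerSeries (Fin n) R) := NoZeroDivisors.to_isDomain _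
  rw [← MulEquiv.prime_iff (finSuccEquiv R n), finSuccEquiv_X_zero]
  exact PowerSeries.X_prime

theorem associated_X_one_add_X_pow_sub_one {σ : Type*} (i : σ) {n : ℕ} (hn : IsUnit (n : R)) :
    Associated (X i : MvPowerSeries σ R) ((1 + X i) ^ n - 1) := by
  have hsum : IsUnit (∑ k ∈ Finset.range n, (1 + X i : MvPowerSeries σ R) ^ k) := by
    rw [isUnit_iff_constantCoeff]
    simpa using hn
  refine ⟨hsum.unit, ?_⟩
  rw [IsUnit.unit_spec, mul_comm, ← geom_sum_mul, add_sub_cancel_left]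

variable {σ : Type*}

variable (R) in
noncomputable def oneAddX (i : σ) : (MvPowerSeries σ R)ˣ :=
  (isUnit_iff_constantCoeff.2 (by simp) : IsUnit (1 + X i : MvPowerSeries σ R)).unit

@[simp]
theorem val_oneAddX (i : σ) : (oneAddX R i : MvPowerSeries σ R) = 1 + X i :=
  IsUnit.unit_spec _

variable [Fintype σ]

variable (R) in
noncomputable def oneAddXZPow (v : σ → ℤ) : (MvPowerSeries σ R)ˣ :=
  ∏ j, oneAddX R j ^ v j

theorem val_oneAddXZPow_natCast (v : σ → ℕ) :
    (oneAddXZPow R (fun i => (v i : ℤ)) : MvPowerSeries σ R) = ∏ i, (1 + X i) ^ v i := by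
  simp [oneAddXZPow]

theorem constantCoeff_oneAddXZPow (v : σ → ℤ) :
    constantCoeff (oneAddXZPow R v : MvPowerSeries σ R) = 1 := by
  have hX (j : σ) : Units.map ((constantCoeff : MvPowerSeries σ R →+* R) :
      MvPowerSeries σ R →* R) (oneAddX R j) = 1 :=
    Units.ext (by simp)
  rw [← MonoidHom.coe_coe, ← Units.coe_map, oneAddXZPow, map_prod]
  simp [hX]

theorem hasSubst_oneAddXZPow_sub_one (M : Matrix σ σ ℤ) :
    HasSubst (fun i => (oneAddXZPow R (M i) : MvPowerSeries σ R) - 1) :=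
  hasSubst_of_constantCoeff_zero fun i => by simp [constantCoeff_oneAddXZPow]

variable (R) in
noncomputable def zpowSubst (M : Matrix σ σ ℤ) : MvPowerSeries σ R →ₐ[R] MvPowerSeries σ R :=
  substAlgHom (hasSubst_oneAddXZPow_sub_one M)

theorem zpowSubst_oneAddXZPow (M : Matrix σ σ ℤ) (v : σ → ℤ) :
    zpowSubst R M (oneAddXZPow R v) = oneAddXZPow R (v ᵥ* M) := by
  have hX (j : σ) : Units.map (zpowSubst R M : MvPowerSeries σ R →* MvPowerSeries σ R)
      (oneAddX R j) = oneAddXZPow R (M j) :=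
    Units.ext (by
      rw [Units.coe_map, val_oneAddX, MonoidHom.coe_coe, map_add, map_one, zpowSubst,
        substAlgHom_X, add_sub_cancel])
  rw [← MonoidHom.coe_coe, ← Units.coe_map, oneAddXZPow, map_prod]
  simp only [map_zpow, hX, oneAddXZPow, ← Finset.prod_zpow, ← zpow_mul]
  rw [Finset.prod_comm]
  congr! with j
  rw [Finset.prod_zpow_eq_zpow_sum]
  simp only [Matrix.vecMul, dotProduct, mul_comm]

theorem zpowSubst_comp_zpowSubst (M N : Matrix σ σ ℤ) :
    (zpowSubst R N).comp (zpowSubst R M) = zpowSubst R (M * N) := by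
  ext1 f
  rw [AlgHom.comp_apply, zpowSubst, zpowSubst, zpowSubst, substAlgHom_apply, substAlgHom_apply,
    substAlgHom_apply, subst_comp_subst_apply (hasSubst_oneAddXZPow_sub_one M)
      (hasSubst_oneAddXZPow_sub_one N)]
  congr 1
  funext i
  rw [← substAlgHom_apply (hasSubst_oneAddXZPow_sub_one N), map_sub, map_one]
  exact congr($(zpowSubst_oneAddXZPow N (M i)) - 1)

theorem zpowSubst_one [DecidableEq σ] : zpowSubst R (1 : Matrix σ σ ℤ) = AlgHom.id R _ := by
  have hX (i : σ) : (oneAddXZPow R ((1 : Matrix σ σ ℤ) i) : MvPowerSeries σ R) - 1 = X i := by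
    rw [oneAddXZPow, Fintype.prod_eq_single i fun j hj => by simp [Matrix.one_apply_ne' hj]]
    simp
  ext1 f
  rw [zpowSubst, substAlgHom_apply, funext hX, subst_self, AlgHom.id_apply, id]

theorem zpowSubst_prod_one_add_X_pow_sub_one (M : Matrix σ σ ℤ) {v w : σ → ℕ}
    (hvw : (fun i => (v i : ℤ)) ᵥ* M = fun i => (w i : ℤ)) :
    zpowSubst R M (∏ i, (1 + X i) ^ v i - 1) = ∏ i, (1 + X i) ^ w i - 1 := by
  rw [map_sub, map_one, ← val_oneAddXZPow_natCast, zpowSubst_oneAddXZPow, hvw,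
    val_oneAddXZPow_natCast]

variable (R) in
noncomputable def zpowSubstEquiv [DecidableEq σ] (M : (Matrix σ σ ℤ)ˣ) :
    MvPowerSeries σ R ≃ₐ[R] MvPowerSeries σ R :=
  AlgEquiv.ofAlgHom (zpowSubst R M) (zpowSubst R ↑M⁻¹)
    (by rw [zpowSubst_comp_zpowSubst, M.inv_mul, zpowSubst_one])
    (by rw [zpowSubst_comp_zpowSubst, M.mul_inv, zpowSubst_one])

@[simp]
theorem zpowSubstEquiv_apply [DecidableEq σ] (M : (Matrix σ σ ℤ)ˣ) (f : MvPowerSeries σ R) :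
    zpowSubstEquiv R M f = zpowSubst R M f :=
  rfl

theorem prime_one_add_X_pow_mul_one_add_X_pow_sub_one [IsDomain R] {a b : ℕ}
    (hgcd : IsUnit ((a.gcd b : ℕ) : R)) :
    Prime ((1 + X 0) ^ a * (1 + X 1) ^ b - 1 : MvPowerSeries (Fin 2) R) := by
  obtain ⟨A, B, hAB, ha, hb⟩ := Nat.exists_coprime a b
  set g := a.gcd b
  obtain ⟨u, v, huv⟩ : IsCoprime (A : ℤ) B := Nat.isCoprime_iff_coprime.2 hAB
  have hM : IsUnit !![(A : ℤ), B; -v, u] := by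
    rw [Matrix.isUnit_iff_isUnit_det, Matrix.det_fin_two_of, show A * u - B * -v = 1 by
      linear_combination huv]
    exact isUnit_one
  have hvec : (fun i => ((![g, 0] i : ℕ) : ℤ)) ᵥ* !![(A : ℤ), B; -v, u] =
      fun i => ((![a, b] i : ℕ) : ℤ) := by
    ext i
    fin_cases i
    · simpa [Matrix.vecMul, dotProduct, mul_comm] using congr(($ha : ℤ)).symm
    · simpa [Matrix.vecMul, dotProduct, mul_comm] using congr(($hb : ℤ)).symm
  have himage : zpowSubst R !![(A : ℤ), B; -v, u] ((1 + X 0) ^ g - 1) =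
      ((1 + X 0) ^ a * (1 + X 1) ^ b - 1 : MvPowerSeries (Fin 2) R) := by
    simpa [Fin.prod_univ_two] using zpowSubst_prod_one_add_X_pow_sub_one (R := R) _ hvec
  rw [← himage, ← hM.unit_spec, ← zpowSubstEquiv_apply, MulEquiv.prime_iff]
  exact (associated_X_one_add_X_pow_sub_one 0 hgcd).prime (prime_X_zero 1)

end MvPowerSeries

theorem stmt12_general (p : ℕ) [Fact p.Prime] (a b : ℕ)
    (hp : ¬ (p : ℕ) ∣ a ∨ ¬ (p : ℕ) ∣ b) :
    Prime ((1 + MvPowerSeries.X (0 : Fin 2)) ^ a * (1 + MvPowerSeries.X (1 : Fin 2)) ^ b - 1 :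
      MvPowerSeries (Fin 2) ℤ_[p]) := by
  refine MvPowerSeries.prime_one_add_X_pow_mul_one_add_X_pow_sub_one ?_
  rw [PadicInt.isUnit_iff, PadicInt.norm_natCast_eq_one_iff,
    Nat.Prime.coprime_iff_not_dvd Fact.out, Nat.dvd_gcd_iff, not_and_or]
  exact hp

/-- Let `a, b` be natural numbers, not both zero, with `p ∤ a` or
`p ∤ b`.  Then `f_{a,b} = (1+X)^a·(1+Y)^b − 1` is a prime element of `ℤ_p[[X, Y]]`. -/
theorem stmt12 (p : ℕ) [Fact p.Prime] (a b : ℕ) (hab : ¬ (a = 0 ∧ b = 0))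
    (hp : ¬ (p : ℕ) ∣ a ∨ ¬ (p : ℕ) ∣ b) :
    Prime ((1 + MvPowerSeries.X (0 : Fin 2)) ^ a * (1 + MvPowerSeries.X (1 : Fin 2)) ^ b - 1 :
      MvPowerSeries (Fin 2) ℤ_[p]) :=
  stmt12_general p a b hp
end

section
/- Let p be a prime number and let a, b be natural numbers, not both zero, such that p ∤ a or p ∤ b. Then there is a ring isomorphism ℤ_p[[X,Y]]/(f_{a,b}) ≅ ℤ_p[[T]], where f_{a,b} = (1+X)^a·(1+Y)^b − 1 and ℤ_p[[T]] is the ring of formal power series in one variable over ℤ_p. -/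
/-!
Assume `p ∤ a`; the case `p ∤ b` follows by swapping the variables. As `a` is a unit of `ℤ_p`,
the binomial series `c = (1 + Y)^(-b/a) - 1` lies in `Y ℤ_p⟦Y⟧` and `(1 + c)^a (1 + Y)^b = 1`.
View `ℤ_p⟦X, Y⟧` as `A⟦X⟧` with `A = ℤ_p⟦Y⟧`. Then
`f_{a,b} = (1 + Y)^b ((1 + X)^a - (1 + c)^a)`, and the geometric sum writes this as a unit times
`X - c`: its constant term is `≡ a` modulo `(Y)`, and `A` is `Y`-adically complete. Finally
`A⟦X⟧/(X - c) ≅ A[X]/(X - c) ≅ A` by Weierstrass division, `X - c` being distinguished at `(Y)`.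
-/

open PowerSeries

theorem PowerSeries.binomialSeries_nsmul {R A : Type*} [CommRing R] [BinomialRing R] [Ring A]
    [Algebra R A] (n : ℕ) (r : R) : binomialSeries A (n • r) = binomialSeries A r ^ n := by
  induction n with
  | zero => simp
  | succ n ih => rw [succ_nsmul, binomialSeries_add, ih, pow_succ]

section General

variable {A : Type*} [CommRing A] {I : Ideal A}

theorem isUnit_of_sub_mem_of_le_jacobson (hI : I ≤ (⊥ : Ideal A).jacobson) {x y : A}
    (hy : IsUnit y) (hxy : x - y ∈ I) : IsUnit x := by
  obtain ⟨u, rfl⟩ := hy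
  have hmem : x * ↑u⁻¹ - 1 ∈ (⊥ : Ideal A).jacobson :=
    hI (by simpa [sub_mul] using I.mul_mem_right (↑u⁻¹ : A) hxy)
  exact isUnit_of_mul_isUnit_left (Ideal.isUnit_of_sub_one_mem_jacobson_bot _ hmem)

theorem Polynomial.isDistinguishedAt_X_sub_C {c : A} (hc : c ∈ I) :
    (Polynomial.X - Polynomial.C c).IsDistinguishedAt I where
  mem {n} hn := by
    obtain rfl : n = 0 := by have := Polynomial.natDegree_X_sub_C_le c; omega
    simpa using I.neg_mem hc
  monic := Polynomial.monic_X_sub_C c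

namespace PowerSeries

variable [IsAdicComplete I A]

theorem span_one_add_X_pow_mul_C_sub_one {n : ℕ} (hn : IsUnit (n : A)) {c u : A} (hc : c ∈ I)
    (hu : (1 + c) ^ n * u = 1) :
    Ideal.span {((1 + X) ^ n * C u - 1 : A⟦X⟧)} = Ideal.span {X - C c} := by
  set G : A⟦X⟧ := ∑ i ∈ Finset.range n, (1 + X) ^ i * C (1 + c) ^ (n - 1 - i)
  have hgeom : G * (X - C c) = (1 + X) ^ n - C (1 + c) ^ n := by
    rw [show (X : A⟦X⟧) - C c = 1 + X - C (1 + c) by simp]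
    exact geom_sum₂_mul _ _ n
  have hfactor : (1 + X) ^ n * C u - 1 = (C u * G) * (X - C c) := by
    rw [mul_assoc, hgeom, ← map_pow, mul_sub, ← map_mul, mul_comm u, hu, map_one]
    ring
  have hG : IsUnit G := by
    rw [isUnit_iff_constantCoeff]
    refine isUnit_of_sub_mem_of_le_jacobson (IsAdicComplete.le_jacobson_bot I) hn ?_
    rw [← Ideal.Quotient.eq]
    simp [G, Ideal.Quotient.eq_zero_iff_mem.mpr hc]
  have hCu : IsUnit (C u) := (IsUnit.of_mul_eq_one_right _ hu).map C
  rw [hfactor]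
  exact Ideal.span_singleton_mul_left_unit (hCu.mul hG) _

noncomputable def quotientSpanXSubCAlgEquiv {c : A} (hc : c ∈ I) :
    (A⟦X⟧ ⧸ Ideal.span {X - C c}) ≃ₐ[A] A :=
  (Ideal.quotientEquivAlgOfEq A (by simp)).trans
    ((Polynomial.isDistinguishedAt_X_sub_C hc).algEquivQuotient.symm.trans
      (Polynomial.quotientSpanXSubCAlgEquiv c))

end PowerSeries

end General

namespace MvPowerSeries

variable (R : Type*) [CommRing R]

noncomputable def finTwoEquiv : MvPowerSeries (Fin 2) R ≃+* R⟦X⟧⟦X⟧ :=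
  ((renameEquiv R ((_root_.finSuccEquiv 1).trans (Equiv.optionCongr finOneEquiv))).trans
    (optionEquivLeft Unit R)).toRingEquiv

theorem finTwoEquiv_X_zero : finTwoEquiv R (X 0) = PowerSeries.X :=
  (congrArg (optionEquivLeft Unit R) (rename_X _ 0)).trans optionEquivLeft_X_none

theorem finTwoEquiv_X_one : finTwoEquiv R (X 1) = PowerSeries.C PowerSeries.X :=
  (congrArg (optionEquivLeft Unit R) (rename_X _ 1)).trans (optionEquivLeft_X_some ())

end MvPowerSeries

namespace PadicInt

variable {p : ℕ} [Fact p.Prime]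

theorem isUnit_natCast_of_not_dvd {a : ℕ} (ha : ¬ p ∣ a) : IsUnit (a : ℤ_[p]) := by
  by_contra h
  have := not_isUnit_iff.mp h
  rw [← Int.cast_natCast, norm_int_lt_one_iff_dvd] at this
  exact ha (by exact_mod_cast this)

theorem exists_one_add_pow_mul_one_add_X_pow_eq_one {a : ℕ} (ha : ¬ p ∣ a) (b : ℕ) :
    ∃ c ∈ Ideal.span {(X : ℤ_[p]⟦X⟧)}, (1 + c) ^ a * (1 + X) ^ b = 1 := by
  obtain ⟨u, hu⟩ := isUnit_natCast_of_not_dvd ha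
  refine ⟨binomialSeries ℤ_[p] (-(b : ℤ_[p]) * ↑u⁻¹) - 1, ?_, ?_⟩
  · rw [Ideal.mem_span_singleton, X_dvd_iff]
    simp
  · have hr : a • (-(b : ℤ_[p]) * ↑u⁻¹) = -b := by
      rw [nsmul_eq_mul, ← hu, mul_left_comm, Units.mul_inv, mul_one]
    rw [add_sub_cancel, ← binomialSeries_nsmul, hr, ← binomialSeries_nat (R := ℤ_[p]),
      ← binomialSeries_add, neg_add_cancel, binomialSeries_zero]

theorem nonempty_quotient_ringEquiv_of_not_dvd_left {a : ℕ} (ha : ¬ p ∣ a) (b : ℕ) :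
    Nonempty ((MvPowerSeries (Fin 2) ℤ_[p] ⧸
        Ideal.span {((1 + MvPowerSeries.X 0) ^ a * (1 + MvPowerSeries.X 1) ^ b - 1 :
          MvPowerSeries (Fin 2) ℤ_[p])}) ≃+* ℤ_[p]⟦X⟧) := by
  obtain ⟨c, hc, hcab⟩ := exists_one_add_pow_mul_one_add_X_pow_eq_one ha b
  have ha' : IsUnit (a : ℤ_[p]⟦X⟧) := by
    simpa using (isUnit_natCast_of_not_dvd ha).map (C : ℤ_[p] →+* ℤ_[p]⟦X⟧)
  have hmap : Ideal.span {((1 + X) ^ a * C ((1 + X) ^ b) - 1 : ℤ_[p]⟦X⟧⟦X⟧)} =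
      Ideal.map (MvPowerSeries.finTwoEquiv ℤ_[p])
        (Ideal.span {(1 + MvPowerSeries.X 0) ^ a * (1 + MvPowerSeries.X 1) ^ b - 1}) := by
    rw [Ideal.map_span, Set.image_singleton]
    simp [MvPowerSeries.finTwoEquiv_X_zero, MvPowerSeries.finTwoEquiv_X_one]
  exact ⟨(Ideal.quotientEquiv _ _ _ hmap).trans <|
    (Ideal.quotEquivOfEq (span_one_add_X_pow_mul_C_sub_one ha' hc hcab)).trans
      (quotientSpanXSubCAlgEquiv hc : _ ≃+* ℤ_[p]⟦X⟧)⟩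

end PadicInt

theorem stmt13_general (p : ℕ) [Fact p.Prime] (a b : ℕ)
    (hp : ¬ (p : ℕ) ∣ a ∨ ¬ (p : ℕ) ∣ b) :
    Nonempty ((MvPowerSeries (Fin 2) ℤ_[p] ⧸
        Ideal.span {((1 + MvPowerSeries.X (0 : Fin 2)) ^ a *
          (1 + MvPowerSeries.X (1 : Fin 2)) ^ b - 1 : MvPowerSeries (Fin 2) ℤ_[p])}) ≃+*
      PowerSeries ℤ_[p]) := by
  rcases hp with ha | hb
  · exact PadicInt.nonempty_quotient_ringEquiv_of_not_dvd_left ha b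
  · obtain ⟨e⟩ := PadicInt.nonempty_quotient_ringEquiv_of_not_dvd_left hb a
    let σ := (MvPowerSeries.renameEquiv ℤ_[p] (Equiv.swap (0 : Fin 2) 1)).toRingEquiv
    have hswap : Ideal.span {((1 + MvPowerSeries.X 0) ^ b * (1 + MvPowerSeries.X 1) ^ a - 1 :
        MvPowerSeries (Fin 2) ℤ_[p])} = Ideal.map σ
          (Ideal.span {(1 + MvPowerSeries.X 0) ^ a * (1 + MvPowerSeries.X 1) ^ b - 1}) := by
      rw [Ideal.map_span, Set.image_singleton]
      simp [σ, mul_comm]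
    exact ⟨(Ideal.quotientEquiv _ _ σ hswap).trans e⟩

/-- Let `a, b` be natural numbers, not both zero, with `p ∤ a` or
`p ∤ b`.  Then there is a ring isomorphism `ℤ_p[[X, Y]]/(f_{a,b}) ≅ ℤ_p[[T]]`, where
`f_{a,b} = (1+X)^a·(1+Y)^b − 1`. -/
theorem stmt13 (p : ℕ) [Fact p.Prime] (a b : ℕ) (hab : ¬ (a = 0 ∧ b = 0))
    (hp : ¬ (p : ℕ) ∣ a ∨ ¬ (p : ℕ) ∣ b) :
    Nonempty ((MvPowerSeries (Fin 2) ℤ_[p] ⧸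
        Ideal.span {((1 + MvPowerSeries.X (0 : Fin 2)) ^ a *
          (1 + MvPowerSeries.X (1 : Fin 2)) ^ b - 1 : MvPowerSeries (Fin 2) ℤ_[p])}) ≃+*
      PowerSeries ℤ_[p]) :=
  stmt13_general p a b hp
end

section
/- Let p be a prime number and let (a,b) and (a',b') be pairs of natural numbers, each pair not both zero, satisfying (p ∤ a or p ∤ b) and (p ∤ a' or p ∤ b'), and suppose a·b' ≠ a'·b. Then the elements f_{a,b} = (1+X)^a(1+Y)^b − 1 and f_{a',b'} = (1+X)^{a'}(1+Y)^{b'} − 1 of ℤ_p[[X,Y]] are coprime: every common divisor of f_{a,b} and f_{a',b'} in ℤ_p[[X,Y]] is a unit. -/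
/-!
Modulo a common divisor `d`, the units `u = 1 + X` and `v = 1 + Y` satisfy
`u ^ a * v ^ b = u ^ a' * v ^ b' = 1`, hence `u ^ N = v ^ N = 1` for `N = |a b' - a' b| ≠ 0`.
Write `N = p ^ k * m` with `p ∤ m`. Over `𝔽_p` the Frobenius gives
`(1 + X) ^ N - 1 = (1 + X ^ p ^ k) ^ m - 1`, a unit times `X ^ p ^ k`, so the reduction of `d`
divides both `X ^ p ^ k` and `Y ^ p ^ k`. As `X` is prime in `𝔽_p⟦X, Y⟧` and does not divide `Y`,
the reduction of `d` is a unit, and then so is `d`, since reduction `ℤ_p → 𝔽_p` is a local map.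
-/

open MvPowerSeries Finset

theorem zpow_mul_sub_mul_eq_one {G : Type*} [CommGroup G] {x y : G} {a b a' b' : ℤ}
    (h : x ^ a * y ^ b = 1) (h' : x ^ a' * y ^ b' = 1) : x ^ (a * b' - a' * b) = 1 :=
  calc x ^ (a * b' - a' * b) = (x ^ a * y ^ b) ^ b' / (x ^ a' * y ^ b') ^ b := by
        rw [mul_zpow, mul_zpow, mul_div_mul_comm, ← zpow_mul, ← zpow_mul, ← zpow_mul, ← zpow_mul,
          mul_comm b b', div_self', mul_one, zpow_sub, div_eq_mul_inv]
    _ = 1 := by rw [h, h', one_zpow, one_zpow, div_one]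

theorem dvd_units_sub_one_iff {R : Type*} [CommRing R] {d : R} {u : Rˣ} :
    d ∣ (u : R) - 1 ↔ Units.map (Ideal.Quotient.mk (Ideal.span {d})).toMonoidHom u = 1 := by
  rw [Units.ext_iff, Units.coe_map, Units.val_one, RingHom.toMonoidHom_eq_coe,
    MonoidHom.coe_coe, ← map_one (Ideal.Quotient.mk _), Ideal.Quotient.eq,
    Ideal.mem_span_singleton]

theorem dvd_pow_natAbs_sub_one_of_dvd {R : Type*} [CommRing R] {d : R} {x y : Rˣ}
    {a b a' b' : ℕ} (h : d ∣ (x : R) ^ a * (y : R) ^ b - 1)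
    (h' : d ∣ (x : R) ^ a' * (y : R) ^ b' - 1) :
    d ∣ (x : R) ^ ((a * b' - a' * b : ℤ).natAbs) - 1 := by
  simp only [← Units.val_pow_eq_pow_val, ← Units.val_mul, dvd_units_sub_one_iff, map_mul,
    map_pow] at h h' ⊢
  rw [pow_natAbs_eq_one]
  exact zpow_mul_sub_mul_eq_one (by simpa only [zpow_natCast] using h)
    (by simpa only [zpow_natCast] using h')

theorem PowerSeries.isUnit_of_dvd_X_pow_of_dvd_C {R : Type*} [CommRing R] [IsDomain R]
    {e : PowerSeries R} {n : ℕ} {r : R} (hr : r ≠ 0) (hX : e ∣ PowerSeries.X ^ n)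
    (hC : e ∣ PowerSeries.C r) : IsUnit e := by
  obtain ⟨_ | i, -, he⟩ := (dvd_prime_pow PowerSeries.X_prime n).1 hX
  · exact he.isUnit_iff.2 isUnit_one
  · have hXC : PowerSeries.X ∣ PowerSeries.C r :=
      (dvd_pow_self _ i.succ_ne_zero).trans (he.symm.dvd.trans hC)
    exact absurd (by simpa using PowerSeries.X_dvd_iff.1 hXC) hr

theorem MvPowerSeries.isUnit_of_dvd_X_zero_pow_of_dvd_X_one_pow {R : Type*} [CommRing R]
    [IsDomain R] {e : MvPowerSeries (Fin 2) R} {m n : ℕ} (h₀ : e ∣ X 0 ^ m) (h₁ : e ∣ X 1 ^ n) :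
    IsUnit e := by
  have : IsDomain (MvPowerSeries (Fin 1) R) := NoZeroDivisors.to_isDomain _
  let φ := finSuccEquiv R 1
  rw [← isUnit_map_iff φ]
  have hX : (X 0 : MvPowerSeries (Fin 1) R) ≠ 0 := fun h ↦ by
    simpa using congrArg (coeff (.single 0 1)) h
  refine PowerSeries.isUnit_of_dvd_X_pow_of_dvd_C (n := m) (pow_ne_zero n hX) ?_ ?_
  · simpa [φ, finSuccEquiv_X_zero] using map_dvd φ h₀
  · have hφX₁ : φ (X 1) = PowerSeries.C (X 0) := finSuccEquiv_X_succ (0 : Fin 1)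
    simpa [hφX₁] using map_dvd φ h₁

theorem one_add_pow_sub_one_eq_geom_sum_mul {S : Type*} [CommRing S] (p : ℕ) [Fact p.Prime]
    [CharP S p] (t : S) (k m : ℕ) :
    (1 + t) ^ (p ^ k * m) - 1 = (∑ i ∈ range m, (1 + t ^ p ^ k) ^ i) * t ^ p ^ k := by
  rw [pow_mul, add_pow_char_pow, one_pow, ← geom_sum_mul, add_sub_cancel_left]

theorem MvPowerSeries.associated_one_add_X_pow_sub_one {σ K : Type*} [Field K] (p : ℕ)
    [Fact p.Prime] [CharP K p] (s : σ) {N : ℕ} (hN : N ≠ 0) :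
    Associated (X s ^ p ^ N.factorization p) ((1 + X s : MvPowerSeries σ K) ^ N - 1) := by
  have := charP_of_injective_algebraMap' K (A := MvPowerSeries σ K) p
  set k := N.factorization p
  have hunit : IsUnit (∑ i ∈ range (N / p ^ k), (1 + X s ^ p ^ k : MvPowerSeries σ K) ^ i) := by
    rw [isUnit_iff_constantCoeff]
    simpa [k, Fact.out (p := p.Prime) |>.ne_zero, CharP.cast_eq_zero_iff K p] using
      Nat.not_dvd_ordCompl (Fact.out : p.Prime) hN
  refine ⟨hunit.unit, ?_⟩
  rw [IsUnit.unit_spec, mul_comm, ← one_add_pow_sub_one_eq_geom_sum_mul,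
    Nat.ordProj_mul_ordCompl_eq_self]

theorem MvPowerSeries.isUnit_of_dvd_one_add_X_pow_sub_one {R K : Type*} [CommRing R] [Field K]
    (p : ℕ) [Fact p.Prime] [CharP K p] (φ : R →+* K) [IsLocalHom φ]
    {d : MvPowerSeries (Fin 2) R} {N : ℕ} (hN : N ≠ 0) (h₀ : d ∣ (1 + X 0) ^ N - 1)
    (h₁ : d ∣ (1 + X 1) ^ N - 1) : IsUnit d := by
  have hdvd (s : Fin 2) (h : d ∣ (1 + X s) ^ N - 1) : map φ d ∣ X s ^ p ^ N.factorization p := by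
    have hφ : map φ ((1 + X s) ^ N - 1) = (1 + X s) ^ N - 1 := by simp
    exact (hφ ▸ map_dvd (map φ) h).trans (associated_one_add_X_pow_sub_one p s hN).symm.dvd
  rw [← isUnit_map_iff (map φ)]
  exact isUnit_of_dvd_X_zero_pow_of_dvd_X_one_pow (hdvd 0 h₀) (hdvd 1 h₁)

theorem MvPowerSeries.isUnit_one_add_X {σ R : Type*} [CommRing R] (s : σ) :
    IsUnit (1 + X s : MvPowerSeries σ R) := by
  simp [isUnit_iff_constantCoeff]

theorem stmt14_general (p : ℕ) [Fact p.Prime] (a b a' b' : ℕ)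
    (hne : a * b' ≠ a' * b) :
    ∀ d : MvPowerSeries (Fin 2) ℤ_[p],
      d ∣ ((1 + MvPowerSeries.X (0 : Fin 2)) ^ a *
          (1 + MvPowerSeries.X (1 : Fin 2)) ^ b - 1) →
      d ∣ ((1 + MvPowerSeries.X (0 : Fin 2)) ^ a' *
          (1 + MvPowerSeries.X (1 : Fin 2)) ^ b' - 1) →
      IsUnit d := by
  intro d h h'
  set x := (isUnit_one_add_X (R := ℤ_[p]) (0 : Fin 2)).unit
  set y := (isUnit_one_add_X (R := ℤ_[p]) (1 : Fin 2)).unit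
  have hN : (a * b' - a' * b : ℤ).natAbs ≠ 0 := by omega
  refine isUnit_of_dvd_one_add_X_pow_sub_one p PadicInt.toZMod hN
    (dvd_pow_natAbs_sub_one_of_dvd (x := x) (y := y) h h') ?_
  rw [← Int.natAbs_neg, neg_sub, mul_comm (a : ℤ), mul_comm (a' : ℤ)]
  exact dvd_pow_natAbs_sub_one_of_dvd (x := y) (y := x) (by rwa [mul_comm]) (by rwa [mul_comm])

/-- Let `(a, b)` and `(a', b')` be pairs of natural numbers, each
pair not both zero, with `p ∤ a` or `p ∤ b`, and `p ∤ a'` or `p ∤ b'`, and suppose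
`a·b' ≠ a'·b`.  Then `f_{a,b} = (1+X)^a·(1+Y)^b − 1` and
`f_{a',b'} = (1+X)^{a'}·(1+Y)^{b'} − 1` are coprime in `ℤ_p[[X, Y]]`: every common
divisor is a unit. -/
theorem stmt14 (p : ℕ) [Fact p.Prime] (a b a' b' : ℕ)
    (hab : ¬ (a = 0 ∧ b = 0)) (hab' : ¬ (a' = 0 ∧ b' = 0))
    (hp : ¬ (p : ℕ) ∣ a ∨ ¬ (p : ℕ) ∣ b) (hp' : ¬ (p : ℕ) ∣ a' ∨ ¬ (p : ℕ) ∣ b')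
    (hne : a * b' ≠ a' * b) :
    ∀ d : MvPowerSeries (Fin 2) ℤ_[p],
      d ∣ ((1 + MvPowerSeries.X (0 : Fin 2)) ^ a *
          (1 + MvPowerSeries.X (1 : Fin 2)) ^ b - 1) →
      d ∣ ((1 + MvPowerSeries.X (0 : Fin 2)) ^ a' *
          (1 + MvPowerSeries.X (1 : Fin 2)) ^ b' - 1) →
      IsUnit d :=
  stmt14_general p a b a' b' hne
end
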